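/- arXiv:1204.0414 — 2 statements merged into one kernel-verified Lean document; each statement's English description precedes it below -/
import Mathlib

section
/- Let M, N ∈ 𝓒(X) be connected matrices. Then every total directed path in X_M is dihomotopic in X to every total directed path in X_N (such total paths exist in both X_M and X_N since M and N are alive). -/
open Set

/-- A directed path in `Y ⊆ ℝⁿ`: a continuous map from the unit interval, all of whose
coordinate functions are monotone nondecreasing, with values in `Y`. -/
def IsDiPath (n : ℕ) (Y : Set (Fin n → ℝ)) (p : unitInterval → Fin n → ℝ) : Prop :=
  Continuous p ∧ (∀ t, p t ∈ Y) ∧ ∀ j : Fin n, Monotone fun t => p t j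

/-- A total directed path goes from `(0,…,0)` to `(1,…,1)`. -/
def IsTotalDiPath (n : ℕ) (Y : Set (Fin n → ℝ)) (p : unitInterval → Fin n → ℝ) : Prop :=
  IsDiPath n Y p ∧ p 0 = (fun _ => (0:ℝ)) ∧ p 1 = (fun _ => (1:ℝ))

/-- The unit cube `[0,1]^n`. -/
def cube (n : ℕ) : Set (Fin n → ℝ) := {z | ∀ j, z j ∈ Icc (0:ℝ) 1}

/-- `M` has no zero row. -/
def NoZeroRow {l n : ℕ} (M : Fin l → Fin n → Bool) : Prop := ∀ i, ∃ j, M i j = true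

/-- Every column of `M` contains exactly one `1`. -/
def ColUnit {l n : ℕ} (M : Fin l → Fin n → Bool) : Prop := ∀ j, ∃! i, M i j = true

/-- Entrywise order on boolean matrices. -/
def matLE {l n : ℕ} (M N : Fin l → Fin n → Bool) : Prop := ∀ i j, M i j = true → N i j = true

/-- The extended hole `R̃^i_j = ∏_{j'<j} [0,y^i_{j'}) × (x^i_j, y^i_j) × ∏_{j'>j} [0,y^i_{j'})`. -/
def extHole {l n : ℕ} (x y : Fin l → Fin n → ℝ) (i : Fin l) (j : Fin n) : Set (Fin n → ℝ) :=
  {z | z j ∈ Ioo (x i j) (y i j) ∧ ∀ j', j' ≠ j → z j' ∈ Ico (0:ℝ) (y i j')}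

/-- `X_M = [0,1]^n \ ⋃_{(i,j) : M(i,j)=1} R̃^i_j`. -/
def XM {l n : ℕ} (x y : Fin l → Fin n → ℝ) (M : Fin l → Fin n → Bool) : Set (Fin n → ℝ) :=
  cube n \ ⋃ (i : Fin l) (j : Fin n) (_ : M i j = true), extHole x y i j

/-- `M` is dead if `X_M` contains no total directed path. -/
def Dead {l n : ℕ} (x y : Fin l → Fin n → ℝ) (M : Fin l → Fin n → Bool) : Prop :=
  ¬ ∃ p, IsTotalDiPath n (XM x y M) p

/-- `X = [0,1]^n \ ⋃_i R^i` where `R^i = ∏_j (x^i_j, y^i_j)`. -/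
def Xfull {l n : ℕ} (x y : Fin l → Fin n → ℝ) : Set (Fin n → ℝ) :=
  cube n \ ⋃ i : Fin l, {z | ∀ j, z j ∈ Ioo (x i j) (y i j)}

/-- Elementary dihomotopy of directed paths with fixed common endpoints in `Y`. -/
def ElemDihomotopic (n : ℕ) (Y : Set (Fin n → ℝ)) (p q : unitInterval → Fin n → ℝ) : Prop :=
  IsDiPath n Y p ∧ IsDiPath n Y q ∧ p 0 = q 0 ∧ p 1 = q 1 ∧
  ∃ H : unitInterval → unitInterval → Fin n → ℝ,
    Continuous (fun tu : unitInterval × unitInterval => H tu.1 tu.2) ∧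
    H 0 = p ∧ H 1 = q ∧ (∀ t, IsDiPath n Y (H t)) ∧
    ∀ (u : unitInterval) (j : Fin n), Monotone fun t => H t u j

/-- Dihomotopy: equivalence relation generated by elementary dihomotopy. -/
def Dihomotopic (n : ℕ) (Y : Set (Fin n → ℝ)) :
    (unitInterval → Fin n → ℝ) → (unitInterval → Fin n → ℝ) → Prop :=
  Relation.EqvGen (ElemDihomotopic n Y)

/-- Two matrices are connected when their entrywise minimum has no zero row. -/
def MatConnected {l n : ℕ} (M N : Fin l → Fin n → Bool) : Prop :=
  ∀ i, ∃ j, M i j = true ∧ N i j = true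

/-!
Let `K = M ∧ N`. Since `K ≤ M` and `K ≤ N`, both `p` and `q` run in `X_K`, and since `K` has
no zero row, `X_K ⊆ X` (a point of `R^i` lies in `R̃^i_j` for every `j`). Unlike `X`, the space
`X_K` is closed under coordinatewise maximum: if `a ⊔ b ∈ R̃^i_j`, then whichever of `a`, `b`
realises the `j`-th coordinate already lies in `R̃^i_j`, because within the cube `R̃^i_j` is a
down-set in the other coordinates. Hence `(t, u) ↦ p u ⊔ q (t u)` is an elementary dihomotopy in `X_K` from `p`
to `p ⊔ q`, and symmetrically from `q` to `q ⊔ p = p ⊔ q`.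
-/

open Set unitInterval

instance Pi.continuousSup {ι : Type*} {π : ι → Type*} [∀ i, TopologicalSpace (π i)]
    [∀ i, Max (π i)] [∀ i, ContinuousSup (π i)] : ContinuousSup (∀ i, π i) where
  continuous_sup := continuous_pi fun i =>
    ((continuous_apply i).comp continuous_fst).sup ((continuous_apply i).comp continuous_snd)

section DirectedPaths

variable {n : ℕ} {Y Z : Set (Fin n → ℝ)} {p q : unitInterval → Fin n → ℝ}

theorem IsDiPath.mono (hp : IsDiPath n Y p) (hYZ : Y ⊆ Z) : IsDiPath n Z p :=
  ⟨hp.1, fun t => hYZ (hp.2.1 t), hp.2.2⟩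

theorem IsDiPath.monotone (hp : IsDiPath n Y p) : Monotone p :=
  fun _ _ hst j => hp.2.2 j hst

theorem IsDiPath.sup (hY : SupClosed Y) (hp : IsDiPath n Y p) (hq : IsDiPath n Y q) :
    IsDiPath n Y (p ⊔ q) :=
  ⟨hp.1.sup hq.1, fun t => hY (hp.2.1 t) (hq.2.1 t), fun j => (hp.2.2 j).sup (hq.2.2 j)⟩

theorem IsDiPath.comp_mul_left (hq : IsDiPath n Y q) (t : unitInterval) :
    IsDiPath n Y fun u => q (t * u) :=
  ⟨hq.1.comp (continuous_const.mul continuous_id), fun _ => hq.2.1 _,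
    fun j => (hq.2.2 j).comp fun _ _ h => mul_le_mul_right h t⟩

theorem ElemDihomotopic.mono (h : ElemDihomotopic n Y p q) (hYZ : Y ⊆ Z) :
    ElemDihomotopic n Z p q := by
  obtain ⟨hp, hq, h0, h1, H, hH, hH0, hH1, hHt, hHu⟩ := h
  exact ⟨hp.mono hYZ, hq.mono hYZ, h0, h1, H, hH, hH0, hH1, fun t => (hHt t).mono hYZ, hHu⟩

theorem Dihomotopic.mono (h : Dihomotopic n Y p q) (hYZ : Y ⊆ Z) : Dihomotopic n Z p q :=
  Relation.EqvGen.mono (fun _ _ h' => h'.mono hYZ) _ _ h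

theorem elemDihomotopic_sup (hY : SupClosed Y) (hp : IsDiPath n Y p) (hq : IsDiPath n Y q)
    (h0 : q 0 ≤ p 0) (h1 : q 1 ≤ p 1) : ElemDihomotopic n Y p (p ⊔ q) := by
  refine ⟨hp, hp.sup hY hq, (sup_eq_left.2 h0).symm, (sup_eq_left.2 h1).symm,
    fun t u => p u ⊔ q (t * u), ?_, ?_, ?_, fun t => hp.sup hY (hq.comp_mul_left t), ?_⟩
  · exact (hp.1.comp continuous_snd).sup (hq.1.comp continuous_mul)
  · funext u
    simpa using h0.trans (hp.monotone zero_le)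
  · funext u
    simp
  · intro u j t t' htt'
    exact sup_le_sup_left (hq.2.2 j (mul_le_mul_left htt' u)) _

theorem dihomotopic_of_supClosed (hY : SupClosed Y) (hp : IsDiPath n Y p) (hq : IsDiPath n Y q)
    (h0 : p 0 = q 0) (h1 : p 1 = q 1) : Dihomotopic n Y p q := by
  have hpq := elemDihomotopic_sup hY hp hq h0.ge h1.ge
  have hqp := elemDihomotopic_sup hY hq hp h0.le h1.le
  rw [sup_comm] at hqp
  exact (Relation.EqvGen.rel _ _ hpq).trans _ _ _ (Relation.EqvGen.rel _ _ hqp).symm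

end DirectedPaths

section CubeMinusHoles

variable {l n : ℕ} {x y : Fin l → Fin n → ℝ} {K M : Fin l → Fin n → Bool}

theorem mem_XM {z : Fin n → ℝ} :
    z ∈ XM x y M ↔ z ∈ cube n ∧ ∀ i j, M i j = true → z ∉ extHole x y i j := by
  simp [XM]

theorem XM_anti (h : matLE K M) : XM x y M ⊆ XM x y K := by
  intro z hz
  rw [mem_XM] at hz ⊢
  exact ⟨hz.1, fun i j hK => hz.2 i j (h i j hK)⟩

theorem XM_subset_Xfull (hx : ∀ i j, 0 < x i j) (hK : NoZeroRow K) : XM x y K ⊆ Xfull x y := by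
  intro z hz
  rw [mem_XM] at hz
  refine ⟨hz.1, fun hR => ?_⟩
  obtain ⟨i, hi⟩ := mem_iUnion.1 hR
  obtain ⟨j, hj⟩ := hK i
  exact hz.2 i j hj ⟨hi j, fun j' _ => ⟨((hx i j').trans (hi j').1).le, (hi j').2⟩⟩

theorem mem_extHole_of_le {a b : Fin n → ℝ} {i : Fin l} {j : Fin n} (ha : a ∈ cube n)
    (hab : a ≤ b) (hj : a j = b j) (hb : b ∈ extHole x y i j) : a ∈ extHole x y i j :=
  ⟨hj ▸ hb.1, fun j' hj' => ⟨(ha j').1, (hab j').trans_lt (hb.2 j' hj').2⟩⟩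

theorem supClosed_XM : SupClosed (XM x y M) := by
  intro a ha b hb
  rw [mem_XM] at ha hb ⊢
  refine ⟨fun j => ⟨(ha.1 j).1.trans le_sup_left, sup_le (ha.1 j).2 (hb.1 j).2⟩, ?_⟩
  intro i j hM hab
  rcases max_cases (a j) (b j) with ⟨hj, -⟩ | ⟨hj, -⟩
  · exact ha.2 i j hM (mem_extHole_of_le ha.1 le_sup_left hj.symm hab)
  · exact hb.2 i j hM (mem_extHole_of_le hb.1 le_sup_right hj.symm hab)

end CubeMinusHoles

theorem stmt5_general {l n : ℕ}
    (x y : Fin l → Fin n → ℝ)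
    (hx : ∀ i j, 0 < x i j)
    (M N : Fin l → Fin n → Bool)
    (hconn : MatConnected M N)
    (p q : unitInterval → Fin n → ℝ)
    (hp : IsTotalDiPath n (XM x y M) p) (hq : IsTotalDiPath n (XM x y N) q) :
    Dihomotopic n (Xfull x y) p q := by
  have hKM : matLE (M ⊓ N) M := fun i j h => (Bool.and_eq_true_iff.1 h).1
  have hKN : matLE (M ⊓ N) N := fun i j h => (Bool.and_eq_true_iff.1 h).2
  have hK : NoZeroRow (M ⊓ N) := fun i =>
    let ⟨j, hMj, hNj⟩ := hconn i
    ⟨j, Bool.and_eq_true_iff.2 ⟨hMj, hNj⟩⟩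
  refine (dihomotopic_of_supClosed supClosed_XM (hp.1.mono (XM_anti hKM))
    (hq.1.mono (XM_anti hKN)) ?_ ?_).mono (XM_subset_Xfull hx hK)
  · rw [hp.2.1, hq.2.1]
  · rw [hp.2.2, hq.2.2]

theorem stmt5 {l n : ℕ} (hn : 1 ≤ n) (hl : 1 ≤ l)
    (x y : Fin l → Fin n → ℝ)
    (hx : ∀ i j, 0 < x i j) (hxy : ∀ i j, x i j < y i j) (hy1 : ∀ i j, y i j < 1)
    (M N : Fin l → Fin n → Bool)
    (hMR : NoZeroRow M) (hNR : NoZeroRow N)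
    (hMa : ∃ p, IsTotalDiPath n (XM x y M) p) (hNa : ∃ p, IsTotalDiPath n (XM x y N) p)
    (hconn : MatConnected M N)
    (p q : unitInterval → Fin n → ℝ)
    (hp : IsTotalDiPath n (XM x y M) p) (hq : IsTotalDiPath n (XM x y N) q) :
    Dihomotopic n (Xfull x y) p q :=
  stmt5_general x y hx M N hconn p q hp hq
end

section
/- Let 0 < a < b < 1 and let X = [0,1]^3 \ (a,b)^3 be the cube minus an open cube. Then X contains a total directed path, and any two total directed paths in X are dihomotopic in X; i.e., there is exactly one dihomotopy class of total directed paths in X. -/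
open Set

/-!
Write `X = [0,1]ⁿ \ (a,b)ⁿ` with `n ≥ 3`. The times at which a coordinate of a total dipath `p`
in `X` lies in `(a,b)` form an interval; since these intervals have no common point, one of them
ends before another begins, and so `p` passes the box via some coordinate `i`: whenever all the
other coordinates exceed `a`, the `i`-th one is already at least `b`. Such a `p` is dihomotopic to
the path `cᵢ` that runs along the `i`-th edge first: pushing `cᵢ` into `p` from below deforms `p`
to `p ⊔ cᵢ`, and squeezing `p ⊔ cᵢ` down onto `cᵢ` deforms it to `cᵢ`. Finally `cᵢ` and `cᵢ'`
are both dihomotopic to the path that runs along the `k`-th edge last, for any `k ∉ {i, i'}`.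
-/

open unitInterval

section Dipath

variable {n : ℕ} {Y : Set (Fin n → ℝ)}

theorem isDiPath_iff {p : I → Fin n → ℝ} :
    IsDiPath n Y p ↔ Continuous p ∧ (∀ t, p t ∈ Y) ∧ Monotone p := by
  rw [IsDiPath, monotone_iff_apply₂]

theorem ElemDihomotopic.dihomotopic {p q : I → Fin n → ℝ} (h : ElemDihomotopic n Y p q) :
    Dihomotopic n Y p q :=
  .rel _ _ h

theorem ElemDihomotopic.of_homotopy {p q : I → Fin n → ℝ} (H : I → I → Fin n → ℝ)
    (hH : Continuous fun tu : I × I => H tu.1 tu.2) (hY : ∀ t u, H t u ∈ Y)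
    (hu : ∀ t, Monotone (H t)) (ht : ∀ u, Monotone fun t => H t u)
    (hp : H 0 = p) (hq : H 1 = q) (h0 : p 0 = q 0) (h1 : p 1 = q 1) :
    ElemDihomotopic n Y p q := by
  have hdi t : IsDiPath n Y (H t) :=
    isDiPath_iff.2 ⟨hH.comp (.prodMk_right t), hY t, hu t⟩
  subst hp hq
  exact ⟨hdi 0, hdi 1, h0, h1, H, hH, rfl, rfl, hdi, fun u => monotone_iff_apply₂.1 (ht u)⟩

theorem elemDihomotopic_sup_s11 {p h : I → Fin n → ℝ} (hp : IsDiPath n Y p)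
    (hhc : Continuous h) (hhm : Monotone h) (h0 : ∀ u, h 0 ≤ p u) (h1 : h 1 ≤ p 1)
    (hY : ∀ u w, w ≤ u → p u ⊔ h w ∈ Y) : ElemDihomotopic n Y p (p ⊔ h) := by
  obtain ⟨hpc, -, hpm⟩ := isDiPath_iff.1 hp
  refine .of_homotopy (fun t u => p u ⊔ h (u ⊓ t))
    (continuous_pi fun j => ((continuous_apply j).comp (hpc.comp continuous_snd)).max
      ((continuous_apply j).comp (hhc.comp (continuous_snd.min continuous_fst))))
    (fun t u => hY u _ inf_le_left)
    (fun t => hpm.sup (hhm.comp fun _ _ huv => inf_le_inf_right t huv))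
    (fun u => monotone_const.sup (hhm.comp fun _ _ hst => inf_le_inf_left u hst)) ?_ ?_ ?_ ?_
  · funext u
    simp [sup_eq_left.2 (h0 u)]
  · funext u
    simp [le_one']
  · simp [sup_eq_left.2 (h0 0)]
  · simp [sup_eq_left.2 h1]

theorem elemDihomotopic_inf {g h : I → Fin n → ℝ} (hg : IsDiPath n Y g)
    (hhc : Continuous h) (hhm : Monotone h) (h0 : g 0 ≤ h 0) (h1 : ∀ u, g u ≤ h 1)
    (hY : ∀ u v, u ≤ v → g u ⊓ h v ∈ Y) : ElemDihomotopic n Y (g ⊓ h) g := by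
  obtain ⟨hgc, -, hgm⟩ := isDiPath_iff.1 hg
  refine .of_homotopy (fun t u => g u ⊓ h (u ⊔ t))
    (continuous_pi fun j => ((continuous_apply j).comp (hgc.comp continuous_snd)).min
      ((continuous_apply j).comp (hhc.comp (continuous_snd.max continuous_fst))))
    (fun t u => hY u _ le_sup_left)
    (fun t => hgm.inf (hhm.comp fun _ _ huv => sup_le_sup_right huv t))
    (fun u => monotone_const.inf (hhm.comp fun _ _ hst => sup_le_sup_left hst u)) ?_ ?_ ?_ ?_
  · funext u
    simp
  · funext u
    simp [le_one', inf_eq_left.2 (h1 u)]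
  · simp [inf_eq_left.2 h0]
  · simp [inf_eq_left.2 (h1 1)]

end Dipath

section Threshold

variable {α β : Type*} [CompleteLinearOrder α] [TopologicalSpace α] [OrderTopology α]
  [LinearOrder β] [TopologicalSpace β] [OrderClosedTopology β] {f : α → β}

theorem Monotone.exists_lt_apply_iff (hm : Monotone f) (hc : Continuous f) {c : β}
    (h : f ⊥ ≤ c) : ∃ s, ∀ u, c < f u ↔ s < u := by
  have hs : f (sSup {u | f u ≤ c}) ≤ c :=
    IsClosed.sSup_mem ⟨⊥, h⟩ (isClosed_le hc continuous_const)
  exact ⟨_, fun u => ⟨fun hu => lt_of_not_ge fun hus => (hm hus |>.trans hs).not_gt hu,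
    fun hsu => lt_of_not_ge fun hu => (le_sSup (show u ∈ {u | f u ≤ c} from hu)).not_gt hsu⟩⟩

theorem Monotone.exists_apply_lt_iff (hm : Monotone f) (hc : Continuous f) {c : β}
    (h : c ≤ f ⊤) : ∃ s, ∀ u, f u < c ↔ u < s :=
  Monotone.exists_lt_apply_iff (α := αᵒᵈ) (β := βᵒᵈ) hm.dual hc h

end Threshold

noncomputable def earlyRamp (u : I) : ℝ := min (2 * u) 1

noncomputable def lateRamp (u : I) : ℝ := max (2 * u - 1) 0

theorem continuous_earlyRamp : Continuous earlyRamp := by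
  unfold earlyRamp; fun_prop

theorem continuous_lateRamp : Continuous lateRamp := by
  unfold lateRamp; fun_prop

theorem monotone_earlyRamp : Monotone earlyRamp := fun u v huv => by
  unfold earlyRamp; gcongr

theorem monotone_lateRamp : Monotone lateRamp := fun u v huv => by
  unfold lateRamp; gcongr

@[simp] theorem earlyRamp_zero : earlyRamp 0 = 0 := by simp [earlyRamp]
@[simp] theorem earlyRamp_one : earlyRamp 1 = 1 := by norm_num [earlyRamp]
@[simp] theorem lateRamp_zero : lateRamp 0 = 0 := by simp [lateRamp]
@[simp] theorem lateRamp_one : lateRamp 1 = 1 := by norm_num [lateRamp]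

theorem earlyRamp_mem_Icc (u : I) : earlyRamp u ∈ Icc (0 : ℝ) 1 :=
  ⟨le_min (by linarith [u.2.1]) zero_le_one, min_le_right _ _⟩

theorem lateRamp_mem_Icc (u : I) : lateRamp u ∈ Icc (0 : ℝ) 1 :=
  ⟨le_max_right _ _, max_le (by linarith [u.2.2]) zero_le_one⟩

theorem lateRamp_le_earlyRamp (u : I) : lateRamp u ≤ earlyRamp u :=
  max_le (le_min (by linarith) (by linarith [u.2.2])) (earlyRamp_mem_Icc u).1

theorem lateRamp_eq_zero_or_earlyRamp_eq_one (u : I) : lateRamp u = 0 ∨ earlyRamp u = 1 := by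
  rcases le_total (2 * (u : ℝ)) 1 with h | h
  · exact .inl (max_eq_right (by linarith))
  · exact .inr (min_eq_right h)

section Box

variable {n : ℕ} {a b : ℝ}

def openBox (n : ℕ) (a b : ℝ) : Set (Fin n → ℝ) := {z | ∀ j, z j ∈ Ioo a b}

theorem cube_eq_Icc (n : ℕ) : cube n = Icc 0 1 := by
  ext z
  simp [cube, Pi.le_def, forall_and]

theorem sup_mem_cube {z w : Fin n → ℝ} (hz : z ∈ cube n) (hw : w ∈ cube n) : z ⊔ w ∈ cube n := by
  rw [cube_eq_Icc] at *
  exact ⟨le_sup_of_le_left hz.1, sup_le hz.2 hw.2⟩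

theorem inf_mem_cube {z w : Fin n → ℝ} (hz : z ∈ cube n) (hw : w ∈ cube n) : z ⊓ w ∈ cube n := by
  rw [cube_eq_Icc] at *
  exact ⟨le_inf hz.1 hw.1, inf_le_of_left_le hz.2⟩

theorem IsTotalDiPath.apply_mem_Icc {Y : Set (Fin n → ℝ)} {p q : I → Fin n → ℝ}
    (hY : Y ⊆ cube n) (hp : IsTotalDiPath n Y p) (hq : IsTotalDiPath n Y q) (u : I) :
    p u ∈ Icc (q 0) (q 1) := by
  rw [hq.2.1, hq.2.2]
  exact cube_eq_Icc n ▸ hY (hp.1.2.1 u)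

theorem isTotalDiPath_update {Y : Set (Fin n → ℝ)} (i : Fin n) {f g : I → ℝ} (hfc : Continuous f)
    (hgc : Continuous g) (hfm : Monotone f) (hgm : Monotone g) (h0 : f 0 = 0 ∧ g 0 = 0)
    (h1 : f 1 = 1 ∧ g 1 = 1) (hY : ∀ u, Function.update (fun _ => g u) i (f u) ∈ Y) :
    IsTotalDiPath n Y fun u => Function.update (fun _ => g u) i (f u) := by
  refine ⟨⟨(continuous_pi fun _ => hgc).update i hfc, hY, fun j => ?_⟩, ?_, ?_⟩
  · rcases eq_or_ne j i with rfl | hj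
    · simpa using hfm
    · simpa [hj] using hgm
  all_goals
    funext j
    rcases eq_or_ne j i with rfl | hj
    · simp [h0, h1]
    · simp [hj, h0, h1]

/-- Runs along the `i`-th edge of the cube, then along the diagonal of the face `xᵢ = 1`. -/
noncomputable def edgeFirstPath (i : Fin n) (u : I) : Fin n → ℝ :=
  Function.update (fun _ => lateRamp u) i (earlyRamp u)

/-- Runs along the diagonal of the face `xᵢ = 0`, then along the `i`-th edge. -/
noncomputable def edgeLastPath (i : Fin n) (u : I) : Fin n → ℝ :=
  Function.update (fun _ => earlyRamp u) i (lateRamp u)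

section EdgePaths

variable {i k j : Fin n} {u v : I}

@[simp] theorem edgeFirstPath_apply_self : edgeFirstPath i u i = earlyRamp u := by
  simp [edgeFirstPath]

@[simp] theorem edgeFirstPath_apply_of_ne (h : j ≠ i) : edgeFirstPath i u j = lateRamp u := by
  simp [edgeFirstPath, h]

@[simp] theorem edgeLastPath_apply_self : edgeLastPath i u i = lateRamp u := by
  simp [edgeLastPath]

@[simp] theorem edgeLastPath_apply_of_ne (h : j ≠ i) : edgeLastPath i u j = earlyRamp u := by
  simp [edgeLastPath, h]

theorem edgeFirstPath_mem_cube : edgeFirstPath i u ∈ cube n := fun j => by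
  rcases eq_or_ne j i with rfl | hj
  · simpa using earlyRamp_mem_Icc u
  · simpa [hj] using lateRamp_mem_Icc u

theorem edgeLastPath_mem_cube : edgeLastPath i u ∈ cube n := fun j => by
  rcases eq_or_ne j i with rfl | hj
  · simpa using lateRamp_mem_Icc u
  · simpa [hj] using earlyRamp_mem_Icc u

theorem edgeFirstPath_le_edgeLastPath (hik : i ≠ k) : edgeFirstPath i u ≤ edgeLastPath k u :=
  fun j => by
    rcases eq_or_ne j i with rfl | hji
    · simp [hik]
    rcases eq_or_ne j k with rfl | hjk
    · simp [hji]
    · simpa [hji, hjk] using lateRamp_le_earlyRamp u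

theorem edgeFirstPath_notMem_openBox (hj : j ≠ i) (ha : 0 ≤ a) (hb : b ≤ 1) :
    edgeFirstPath i u ∉ openBox n a b := fun hz => by
  rcases lateRamp_eq_zero_or_earlyRamp_eq_one u with h | h
  · exact ha.not_gt (by simpa [hj, h] using (hz j).1)
  · exact hb.not_gt (by simpa [h] using (hz i).2)

theorem edgeLastPath_notMem_openBox (hj : j ≠ i) (ha : 0 ≤ a) (hb : b ≤ 1) :
    edgeLastPath i u ∉ openBox n a b := fun hz => by
  rcases lateRamp_eq_zero_or_earlyRamp_eq_one u with h | h
  · exact ha.not_gt (by simpa [h] using (hz i).1)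
  · exact hb.not_gt (by simpa [hj, h] using (hz j).2)

theorem isTotalDiPath_edgeFirstPath (hj : j ≠ i) (ha : 0 ≤ a) (hb : b ≤ 1) :
    IsTotalDiPath n (cube n \ openBox n a b) (edgeFirstPath i) :=
  isTotalDiPath_update i continuous_earlyRamp continuous_lateRamp monotone_earlyRamp
    monotone_lateRamp (by simp) (by simp)
    fun _ => ⟨edgeFirstPath_mem_cube, edgeFirstPath_notMem_openBox hj ha hb⟩

theorem isTotalDiPath_edgeLastPath (hj : j ≠ i) (ha : 0 ≤ a) (hb : b ≤ 1) :
    IsTotalDiPath n (cube n \ openBox n a b) (edgeLastPath i) :=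
  isTotalDiPath_update i continuous_lateRamp continuous_earlyRamp monotone_lateRamp
    monotone_earlyRamp (by simp) (by simp)
    fun _ => ⟨edgeLastPath_mem_cube, edgeLastPath_notMem_openBox hj ha hb⟩

end EdgePaths

def PassesBoxVia (a b : ℝ) (p : I → Fin n → ℝ) (i : Fin n) : Prop :=
  ∀ u, (∀ j ≠ i, a < p u j) → b ≤ p u i

/-- The times `u` with `p u j ∈ (a,b)` form an interval `(A j, B j)`, and these intervals have no
common point. -/
theorem exists_passesBoxVia (hab : a < b) {p : I → Fin n → ℝ} (hc : Continuous p)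
    (hm : Monotone p) (h0 : ∀ j, p 0 j ≤ a) (h1 : ∀ j, b ≤ p 1 j)
    (hp : ∀ u, p u ∉ openBox n a b) : ∃ i, PassesBoxVia a b p i := by
  have hmj j : Monotone fun u => p u j := monotone_iff_apply₂.1 hm j
  have hcj j : Continuous fun u => p u j := (continuous_apply j).comp hc
  choose A hA using fun j => (hmj j).exists_lt_apply_iff (hcj j) (h0 j)
  choose B hB using fun j => (hmj j).exists_apply_lt_iff (hcj j) (h1 j)
  unfold PassesBoxVia
  by_contra! hno
  have hAB j i : A j < B i := by
    rcases eq_or_ne j i with rfl | hji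
    · exact (hB j _).1 ((not_lt.1 ((hA j _).not.2 (lt_irrefl _))).trans_lt hab)
    · obtain ⟨u, hu, hub⟩ := hno i
      exact ((hA j u).1 (hu j hji)).trans ((hB i u).1 hub)
  rcases isEmpty_or_nonempty (Fin n) with hn | hn
  · exact hp 0 fun j => isEmptyElim j
  obtain ⟨u, hAu, huB⟩ := Finset.exists_between (Finset.univ_nonempty.image A)
    (Finset.univ_nonempty.image B) (by simpa using hAB)
  simp only [Finset.mem_image, Finset.mem_univ, true_and, forall_exists_index,
    forall_apply_eq_imp_iff] at hAu huB
  exact hp u fun j => ⟨(hA j u).2 (hAu j), (hB j u).2 (huB j)⟩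

section Deformations

variable {p : I → Fin n → ℝ} {i j k : Fin n} {u v : I}

theorem PassesBoxVia.notMem_openBox (hp : PassesBoxVia a b p i) (u : I) {z : Fin n → ℝ}
    (hi : p u i ≤ z i) (hj : ∀ j ≠ i, z j ≤ p u j) : z ∉ openBox n a b := fun hz =>
  ((hp u fun j hji => (hz j).1.trans_le (hj j hji)).trans hi).not_gt (hz i).2

theorem PassesBoxVia.sup_edgeFirstPath_notMem_openBox (hp : PassesBoxVia a b p i) (hb : b ≤ 1)
    (hpu : p u ∈ cube n) (w : I) : p u ⊔ edgeFirstPath i w ∉ openBox n a b := by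
  rw [cube_eq_Icc] at hpu
  rcases lateRamp_eq_zero_or_earlyRamp_eq_one w with h | h
  · refine hp.notMem_openBox u le_sup_left fun j hj => ?_
    simpa [hj, h] using hpu.1 j
  · exact fun hz => hb.not_gt (lt_of_le_of_lt (by simp [h]) (hz i).2)

theorem PassesBoxVia.sup_inf_edgeFirstPath_notMem_openBox (hp : PassesBoxVia a b p i)
    (hj : j ≠ i) (ha : 0 ≤ a) (hb : b ≤ 1) (hpu : p u ∈ cube n) (v : I) :
    (p u ⊔ edgeFirstPath i u) ⊓ edgeFirstPath i v ∉ openBox n a b := by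
  rw [cube_eq_Icc] at hpu
  intro hz
  rcases lateRamp_eq_zero_or_earlyRamp_eq_one v with hv | hv
  · exact ha.not_gt (lt_of_lt_of_le (hz j).1 (by simp [hj, hv]))
  rcases lateRamp_eq_zero_or_earlyRamp_eq_one u with hu | hu
  · refine hp.notMem_openBox u ?_ (fun j' hj' => ?_) hz
    · simpa [hv] using hpu.2 i
    · exact inf_le_of_left_le (sup_le le_rfl (by simpa [hj', hu] using hpu.1 j'))
  · exact hb.not_gt (lt_of_le_of_lt (by simp [hu, hv]) (hz i).2)

theorem edgeLastPath_inf_edgeFirstPath_notMem_openBox (hik : i ≠ k) (ha : 0 ≤ a) (hb : b ≤ 1)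
    (huv : u ≤ v) : edgeLastPath k u ⊓ edgeFirstPath i v ∉ openBox n a b := by
  intro hz
  rcases lateRamp_eq_zero_or_earlyRamp_eq_one u with hu | hu
  · exact ha.not_gt (lt_of_lt_of_le (hz k).1 (by simp [hik.symm, hu]))
  · have hv : earlyRamp v = 1 :=
      le_antisymm (earlyRamp_mem_Icc v).2 (hu ▸ monotone_earlyRamp huv)
    exact hb.not_gt (lt_of_le_of_lt (by simp [hik, hu, hv]) (hz i).2)

theorem PassesBoxVia.dihomotopic_edgeFirstPath (hpi : PassesBoxVia a b p i)
    (hp : IsTotalDiPath n (cube n \ openBox n a b) p) (hj : j ≠ i) (ha : 0 ≤ a) (hb : b ≤ 1) :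
    Dihomotopic n (cube n \ openBox n a b) p (edgeFirstPath i) := by
  have hc := isTotalDiPath_edgeFirstPath hj ha hb
  obtain ⟨hcc, -, hcm⟩ := isDiPath_iff.1 hc.1
  have hpX u : p u ∈ cube n := (hp.1.2.1 u).1
  have hpI := fun u => hp.apply_mem_Icc sdiff_subset hc u
  have hcI := fun u => hc.apply_mem_Icc sdiff_subset hp u
  have up : ElemDihomotopic n _ p (p ⊔ edgeFirstPath i) :=
    elemDihomotopic_sup_s11 hp.1 hcc hcm (fun u => (hpI u).1) (hcI 1).2
      fun u w _ => ⟨sup_mem_cube (hpX u) edgeFirstPath_mem_cube,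
        hpi.sup_edgeFirstPath_notMem_openBox hb (hpX u) w⟩
  have down : ElemDihomotopic n _ ((p ⊔ edgeFirstPath i) ⊓ edgeFirstPath i)
      (p ⊔ edgeFirstPath i) :=
    elemDihomotopic_inf up.2.1 hcc hcm (sup_le (hcI 0).1 le_rfl)
      (fun u => sup_le (hpI u).2 ((hcI u).2.trans (hpI 1).2))
      fun u v _ => ⟨inf_mem_cube (sup_mem_cube (hpX u) edgeFirstPath_mem_cube)
        edgeFirstPath_mem_cube, hpi.sup_inf_edgeFirstPath_notMem_openBox hj ha hb (hpX u) v⟩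
  rw [inf_eq_right.2 le_sup_right] at down
  exact .trans _ _ _ up.dihomotopic (.symm _ _ down.dihomotopic)

theorem elemDihomotopic_edgeFirstPath_edgeLastPath (hik : i ≠ k) (ha : 0 ≤ a) (hb : b ≤ 1) :
    ElemDihomotopic n (cube n \ openBox n a b) (edgeFirstPath i) (edgeLastPath k) := by
  have hc := isTotalDiPath_edgeFirstPath hik.symm ha hb
  have hd := isTotalDiPath_edgeLastPath hik ha hb
  obtain ⟨hcc, -, hcm⟩ := isDiPath_iff.1 hc.1
  have h := elemDihomotopic_inf hd.1 hcc hcm (hc.apply_mem_Icc sdiff_subset hd 0).1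
    (fun u => (hd.apply_mem_Icc sdiff_subset hc u).2)
    fun u v huv => ⟨inf_mem_cube edgeLastPath_mem_cube edgeFirstPath_mem_cube,
      edgeLastPath_inf_edgeFirstPath_notMem_openBox hik ha hb huv⟩
  rwa [inf_eq_right.2 fun u => edgeFirstPath_le_edgeLastPath hik] at h

end Deformations

theorem dihomotopic_of_isTotalDiPath_cube_sdiff_openBox (hn : 3 ≤ n) (ha : 0 < a) (hab : a < b)
    (hb : b < 1) {p q : I → Fin n → ℝ} (hp : IsTotalDiPath n (cube n \ openBox n a b) p)
    (hq : IsTotalDiPath n (cube n \ openBox n a b) q) :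
    Dihomotopic n (cube n \ openBox n a b) p q := by
  have side {r} (hr : IsTotalDiPath n (cube n \ openBox n a b) r) : ∃ i, PassesBoxVia a b r i :=
    exists_passesBoxVia hab (isDiPath_iff.1 hr.1).1 (isDiPath_iff.1 hr.1).2.2
      (fun j => by simp [hr.2.1, ha.le]) (fun j => by simp [hr.2.2, hb.le])
      fun u => (hr.1.2.1 u).2
  obtain ⟨i, hi⟩ := side hp
  obtain ⟨i', hi'⟩ := side hq
  obtain ⟨k, hki, hki'⟩ := Fin.exists_ne_and_ne_of_two_lt i i' hn
  have hpc := hi.dihomotopic_edgeFirstPath hp hki ha.le hb.le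
  have hqc := hi'.dihomotopic_edgeFirstPath hq hki' ha.le hb.le
  have hck := (elemDihomotopic_edgeFirstPath_edgeLastPath hki.symm ha.le hb.le).dihomotopic
  have hck' := (elemDihomotopic_edgeFirstPath_edgeLastPath hki'.symm ha.le hb.le).dihomotopic
  have e := Relation.EqvGen.is_equivalence (ElemDihomotopic n (cube n \ openBox n a b))
  exact e.trans hpc (e.trans hck (e.trans (e.symm hck') (e.symm hqc)))

end Box

theorem stmt11 (a b : ℝ) (ha : 0 < a) (hab : a < b) (hb : b < 1)
    (X : Set (Fin 3 → ℝ))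
    (hX : X = cube 3 \ {z | ∀ j, z j ∈ Ioo a b}) :
    (∃ p, IsTotalDiPath 3 X p) ∧
      ∀ p q, IsTotalDiPath 3 X p → IsTotalDiPath 3 X q → Dihomotopic 3 X p q := by
  subst hX
  exact ⟨⟨edgeFirstPath 0, isTotalDiPath_edgeFirstPath (j := 1) (by decide) ha.le hb.le⟩,
    fun p q hp hq => dihomotopic_of_isTotalDiPath_cube_sdiff_openBox le_rfl ha hab hb hp hq⟩
end
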